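/- arXiv:1811.02664 — 3 statements merged into one kernel-verified Lean document; each statement's English description precedes it below -/
import Mathlib

section
/- Let n - 1 > k ≥ 1 and let G be a k-connected graph of order n. Then the Wiener index satisfies W(G) ≤ (1/4)·n·⌊(n+k-2)/k⌋·(2n+k-2-k·⌊(n+k-2)/k⌋). -/
open Finset SimpleGraph

/-- The status of a vertex: sum of distances to all other vertices. -/
noncomputable def status {V : Type*} [Fintype V] (G : SimpleGraph V) (x : V) : ℕ :=
  ∑ y, G.dist x y

/-- The Wiener index: sum of distances over unordered pairs of vertices. -/
noncomputable def wiener {V : Type*} [Fintype V] [DecidableEq V] (G : SimpleGraph V) : ℚ :=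
  (∑ p ∈ Finset.univ.offDiag, (G.dist p.1 p.2 : ℚ)) / 2

/-- Eccentricity of a vertex. -/
noncomputable def ecc {V : Type*} [Fintype V] (G : SimpleGraph V) (x : V) : ℕ :=
  Finset.univ.sup (fun y => G.dist x y)

/-- Diameter: maximum distance between pairs of vertices. -/
noncomputable def graphDiam {V : Type*} [Fintype V] (G : SimpleGraph V) : ℕ :=
  Finset.univ.sup (fun p : V × V => G.dist p.1 p.2)

/-- The set of vertices at distance exactly `i` from `x`. -/
noncomputable def sphere {V : Type*} [Fintype V] [DecidableEq V] (G : SimpleGraph V) (x : V) (i : ℕ) :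
    Finset V :=
  Finset.univ.filter (fun y => G.dist x y = i)

/-- `G` is `k`-connected: more than `k` vertices and removing any `k-1` vertices
leaves a connected graph. -/
def IsKConnected {V : Type*} [Fintype V] (G : SimpleGraph V) (k : ℕ) : Prop :=
  k < Fintype.card V ∧
    ∀ S : Finset V, S.card ≤ k - 1 → (G.induce ((↑S : Set V)ᶜ)).Connected
/-- Circular distance between two positions on a cycle of length `n`. -/
def circDist (n : ℕ) (i j : Fin n) : ℕ :=
  min ((i.val + n - j.val) % n) ((j.val + n - i.val) % n)

lemma circDist_comm (n : ℕ) (i j : Fin n) : circDist n i j = circDist n j i := by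
  unfold circDist; exact min_comm _ _

/-- The Harary graph `H_{k,n}` for `k` even: each vertex is adjacent to the
nearest `k/2` vertices in each direction around the circle. -/
def hararyEven (k n : ℕ) : SimpleGraph (Fin n) where
  Adj i j := i ≠ j ∧ circDist n i j ≤ k / 2
  symm := by
    constructor
    intro i j h
    exact ⟨h.1.symm, by rw [circDist_comm]; exact h.2⟩
  loopless := ⟨fun i h => h.1 rfl⟩

/-- The Harary graph `H_{k,n}` for `k` odd and `n` even: each vertex is adjacent to
the nearest `(k-1)/2` vertices in each direction and to the diametrically opposite
vertex. -/
def hararyOddEven (k n : ℕ) : SimpleGraph (Fin n) where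
  Adj i j := i ≠ j ∧ (circDist n i j ≤ (k - 1) / 2 ∨ circDist n i j = n / 2)
  symm := by
    constructor
    intro i j h
    refine ⟨h.1.symm, ?_⟩
    rw [circDist_comm]; exact h.2
  loopless := ⟨fun i h => h.1 rfl⟩

/-- The Harary graph `H_{k,n}` for `k` and `n` both odd: obtained from `H_{k-1,n}` by
adding an edge between vertices `a` and `a + (n-1)/2` for `0 ≤ a ≤ (n-1)/2`. -/
def hararyOddOdd (k n : ℕ) : SimpleGraph (Fin n) where
  Adj i j := i ≠ j ∧ (circDist n i j ≤ (k - 1) / 2 ∨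
    ∃ a : Fin n, a.val ≤ (n - 1) / 2 ∧
      ((i = a ∧ j.val = (a.val + (n - 1) / 2) % n) ∨
       (j = a ∧ i.val = (a.val + (n - 1) / 2) % n)))
  symm := by
    constructor
    intro i j h
    refine ⟨h.1.symm, ?_⟩
    rcases h.2 with h2 | ⟨a, ha, hc⟩
    · left; rw [circDist_comm]; exact h2
    · right; exact ⟨a, ha, hc.symm⟩
  loopless := ⟨fun i h => h.1 rfl⟩

/-! If some vertex lies at distance more than `i` from `x`, then each sphere of radius
`1, …, i` around `x` separates `x` from it, so by `k`-connectivity it has at least `k`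
vertices. Hence at most `n - 1 - k i` vertices lie at distance more than `i` from `x`; in
particular every distance is at most `t = ⌊(n + k - 2) / k⌋`. The status of `x` is the sum
of these counts over `i < t`, so it is at most `t (n - 1) - k t (t - 1) / 2`; summing over
`x` and halving gives the bound. -/

namespace SimpleGraph

variable {V : Type*} {G : SimpleGraph V}

theorem Walk.exists_mem_support_dist_eq (x : V) {a b : V} (p : G.Walk a b) {i : ℕ}
    (ha : G.dist x a ≤ i) (hb : i ≤ G.dist x b) : ∃ c ∈ p.support, G.dist x c = i := by
  induction p with
  | nil => exact ⟨_, by simp, le_antisymm ha hb⟩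
  | @cons u v w h q ih =>
    by_cases hu : G.dist x u = i
    · exact ⟨u, by simp, hu⟩
    · have hv : G.dist x v ≤ G.dist x u + G.dist u v := h.reachable.dist_triangle_right x
      rw [dist_eq_one_iff_adj.mpr h] at hv
      obtain ⟨c, hc, hci⟩ := ih (by omega) hb
      exact ⟨c, by simp [hc], hci⟩

end SimpleGraph

namespace IsKConnected

variable {V : Type*} [Fintype V] [DecidableEq V] {G : SimpleGraph V} {k : ℕ}

theorem le_card_sphere (hG : IsKConnected G k) {x z : V} {i : ℕ} (hi : 1 ≤ i)
    (hz : i < G.dist x z) : k ≤ #(sphere G x i) := by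
  by_contra! hlt
  have hx : x ∉ sphere G x i := by simp only [sphere, mem_filter, dist_self]; omega
  have hz' : z ∉ sphere G x i := by simp only [sphere, mem_filter]; omega
  obtain ⟨w⟩ := (hG.2 _ (by omega)).preconnected ⟨x, hx⟩ ⟨z, hz'⟩
  obtain ⟨c, hc, hci⟩ := (w.map (Embedding.induce _).toHom).exists_mem_support_dist_eq x
    (by simp) hz.le
  rw [Walk.support_map, List.mem_map] at hc
  obtain ⟨c, -, rfl⟩ := hc
  exact c.2 (mem_filter.mpr ⟨mem_univ _, hci⟩)

theorem card_far_add_le (hG : IsKConnected G k) {x z : V} {i : ℕ} (hz : i < G.dist x z) :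
    #{y | i < G.dist x y} + k * i + 1 ≤ Fintype.card V := by
  induction i with
  | zero =>
    have : x ∉ ({y | 0 < G.dist x y} : Finset V) := by simp
    simpa using Finset.card_lt_univ_of_notMem this
  | succ i ih =>
    have hsplit : #{y | i < G.dist x y} = #(sphere G x (i + 1)) + #{y | i + 1 < G.dist x y} := by
      rw [← Finset.card_filter_add_card_filter_not (p := fun y => G.dist x y = i + 1)]
      congr 2 <;> ext y <;> simp only [sphere, mem_filter, mem_univ, true_and] <;> omega
    have := hG.le_card_sphere (Nat.le_add_left 1 i) hz
    have := ih (by omega)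
    rw [mul_add_one]
    omega

theorem card_far_le (hG : IsKConnected G k) (x : V) (i : ℕ) :
    #{y | i < G.dist x y} ≤ Fintype.card V - 1 - k * i := by
  by_cases h : ∃ z, i < G.dist x z
  · obtain ⟨z, hz⟩ := h
    have := hG.card_far_add_le hz
    omega
  · push Not at h
    simp [Finset.filter_false_of_mem fun y _ => (h y).not_gt]

theorem dist_le (hG : IsKConnected G k) (hk : 0 < k) (x y : V) :
    G.dist x y ≤ (Fintype.card V + k - 2) / k := by
  obtain h | h := Nat.eq_zero_or_pos (G.dist x y)
  · exact h ▸ Nat.zero_le _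
  have hfar := hG.card_far_add_le (x := x) (z := y) (i := G.dist x y - 1) (by omega)
  have hy : 1 ≤ #{w | G.dist x y - 1 < G.dist x w} :=
    Finset.card_pos.mpr ⟨y, by simp only [mem_filter, mem_univ, true_and]; omega⟩
  rw [Nat.le_div_iff_mul_le hk]
  have : k * (G.dist x y - 1) = G.dist x y * k - k := by rw [Nat.mul_sub_one, mul_comm]
  omega

end IsKConnected

theorem status_eq_sum_card_far {V : Type*} [Fintype V] (G : SimpleGraph V) {x : V} {D : ℕ}
    (hD : ∀ y, G.dist x y ≤ D) :
    status G x = ∑ i ∈ range D, #{y | i < G.dist x y} := by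
  have hrange : ∀ y,
      (range D).bipartiteAbove (fun y i => i < G.dist x y) y = range (G.dist x y) :=
    fun y => by ext i; simp only [bipartiteAbove, mem_filter, mem_range]; have := hD y; omega
  calc status G x = ∑ y, #((range D).bipartiteAbove (fun y i => i < G.dist x y) y) := by
        simp [status, hrange]
    _ = _ := Finset.sum_card_bipartiteAbove_eq_sum_card_bipartiteBelow _

theorem wiener_eq_sum_status {V : Type*} [Fintype V] [DecidableEq V] (G : SimpleGraph V) :
    wiener G = (∑ x, (status G x : ℚ)) / 2 := by
  have hdiag : ∀ p ∈ (univ ×ˢ univ : Finset (V × V)), p ∉ univ.offDiag →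
      (G.dist p.1 p.2 : ℚ) = 0 := by
    intro p _ hp
    simp_all
  rw [wiener, Finset.sum_subset (by simp) hdiag, Finset.sum_product]
  simp [status]

theorem cast_sum_range_tsub_mul {k m t : ℕ} (h : k * (t - 1) ≤ m) :
    ((∑ i ∈ range t, (m - k * i) : ℕ) : ℚ) = t * m - k * (t * (t - 1) / 2) := by
  have hgauss : ∀ t : ℕ, ∑ i ∈ range t, (i : ℚ) = t * (t - 1) / 2 := by
    intro t
    induction t with
    | zero => simp
    | succ t ih => rw [sum_range_succ, ih]; push_cast; ring
  rw [Nat.cast_sum, ← hgauss, mul_sum, ← card_range t, ← nsmul_eq_mul, ← sum_const,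
    card_range, ← sum_sub_distrib]
  refine sum_congr rfl fun i hi => ?_
  have : k * i ≤ k * (t - 1) := Nat.mul_le_mul_left k (by simp at hi; omega)
  push_cast [Nat.cast_sub (this.trans h)]
  rfl

theorem wiener_le_of_kConnected_general (n k : ℕ) (hk : 1 ≤ k)
    (G : SimpleGraph (Fin n)) (hG : IsKConnected G k) :
    wiener G ≤ (1 / 4 : ℚ) * (n : ℚ) * ((n + k - 2) / k : ℕ) *
      (2 * (n : ℚ) + (k : ℚ) - 2 - (k : ℚ) * ((n + k - 2) / k : ℕ)) := by
  set t := (n + k - 2) / k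
  have hkn : k < n := by simpa using hG.1
  have hdist : ∀ x y, G.dist x y ≤ t := by simpa using hG.dist_le hk
  have hstatus : ∀ x, status G x ≤ ∑ i ∈ range t, (n - 1 - k * i) := fun x => by
    rw [status_eq_sum_card_far G (hdist x)]
    exact sum_le_sum fun i _ => by simpa using hG.card_far_le x i
  have ht : k * (t - 1) ≤ n - 1 := by
    have : t * k ≤ n + k - 2 := Nat.div_mul_le_self _ _
    rw [Nat.mul_sub_one, mul_comm]
    omega
  calc wiener G = (∑ x, (status G x : ℚ)) / 2 := wiener_eq_sum_status G
    _ ≤ (∑ _x : Fin n, ((∑ i ∈ range t, (n - 1 - k * i) : ℕ) : ℚ)) / 2 := by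
      gcongr with x; exact_mod_cast hstatus x
    _ = _ := by
      rw [sum_const, card_univ, Fintype.card_fin, nsmul_eq_mul, cast_sum_range_tsub_mul ht,
        Nat.cast_sub (by omega : 1 ≤ n)]
      ring

/-- In a `k`-connected graph of order `n` with `n - 1 > k ≥ 1`, the Wiener index
satisfies `W(G) ≤ (1/4)·n·⌊(n+k-2)/k⌋·(2n+k-2-k·⌊(n+k-2)/k⌋)`. -/
theorem wiener_le_of_kConnected (n k : ℕ) (hk : 1 ≤ k) (hn : k < n - 1)
    (G : SimpleGraph (Fin n)) (hG : IsKConnected G k) :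
    wiener G ≤ (1 / 4 : ℚ) * (n : ℚ) * ((n + k - 2) / k : ℕ) *
      (2 * (n : ℚ) + (k : ℚ) - 2 - (k : ℚ) * ((n + k - 2) / k : ℕ)) :=
  wiener_le_of_kConnected_general n k hk G hG
end

section
/- Let n - 1 > k ≥ 2 with k even, and let D = ⌊(n+k-2)/k⌋. Then every vertex x of the Harary graph H_{k,n} has status W(x,H_{k,n}) = (1/2)·D·(2n+k-2-kD). -/
/-! Put `r = k / 2`. An edge of `H_{k,n}` moves at most `r` around the circle and jumps of
exactly `r` are edges, so `d(x, y) = ⌈c / r⌉` where `c` is the circular distance from `x` to `y`.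
By rotation the status of every vertex is `∑_{j<n} ⌈min(j, n - j) / r⌉`. Counting by layers,
`⌈c / r⌉ = #{t < D | r t < c}` and exactly `n - 1 - 2rt` indices `j` have `min(j, n - j) > rt`,
so the status is `∑_{t<D} (n - 1 - 2rt) = D(n - 1) - rD(D - 1)`. -/

open Finset SimpleGraph

lemma circDist_eq_min_dist {n : ℕ} (i j : Fin n) :
    circDist n i j = min (Nat.dist i j) (n - Nat.dist i j) := by
  have hi := i.isLt; have hj := j.isLt
  unfold circDist Nat.dist
  rcases lt_trichotomy (i : ℕ) j with h | h | h
  · rw [Nat.mod_eq_of_lt (by omega : (i : ℕ) + n - j < n),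
      show (j : ℕ) + n - i = (j - i) + n by omega, Nat.add_mod_right, Nat.mod_eq_of_lt (by omega)]
    omega
  · simp [h]
  · rw [Nat.mod_eq_of_lt (by omega : (j : ℕ) + n - i < n),
      show (i : ℕ) + n - j = (i - j) + n by omega, Nat.add_mod_right, Nat.mod_eq_of_lt (by omega)]
    omega

lemma circDist_triangle {n : ℕ} (a b c : Fin n) :
    circDist n a c ≤ circDist n a b + circDist n b c := by
  have := a.isLt; have := b.isLt; have := c.isLt
  simp only [circDist_eq_min_dist, Nat.dist]
  omega

lemma circDist_eq_min_val_sub {n : ℕ} (i j : Fin n) :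
    circDist n i j = min (i - j).val (j - i).val := by
  rw [circDist, Fin.val_sub, Fin.val_sub, Nat.add_comm (n - j), Nat.add_comm (n - i),
    ← Nat.add_sub_assoc j.isLt.le, ← Nat.add_sub_assoc i.isLt.le]

lemma circDist_add_right {n : ℕ} [NeZero n] (x a : Fin n) :
    circDist n x (x + a) = min a.val (n - a.val) := by
  rw [circDist_eq_min_val_sub, sub_add_cancel_left, add_sub_cancel_left, Fin.val_neg']
  rcases Nat.eq_zero_or_pos a.val with h | h
  · simp [h]
  · rw [Nat.mod_eq_of_lt (by omega), min_comm]

lemma card_range_filter_mul_lt {r c D : ℕ} (hr : 0 < r) (hc : c ≤ r * D) :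
    #{t ∈ range D | r * t < c} = c ⌈/⌉ r := by
  have hceil : c ⌈/⌉ r ≤ D := (ceilDiv_le_iff_le_mul hr).2 hc
  rw [← card_range (c ⌈/⌉ r)]
  congr 1
  ext t
  have hlt : t < c ⌈/⌉ r ↔ r * t < c := by rw [← not_le, ceilDiv_le_iff_le_mul hr, not_le]
  rw [mem_filter, mem_range, mem_range]
  omega

lemma card_range_filter_lt_min_sub (n s : ℕ) :
    #{j ∈ range n | s < min j (n - j)} = n - 1 - 2 * s := by
  have : {j ∈ range n | s < min j (n - j)} = Ico (s + 1) (n - s) := by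
    ext j
    simp only [mem_filter, mem_range, mem_Ico, lt_min_iff]
    omega
  rw [this, Nat.card_Ico]
  omega

lemma sum_range_min_sub_ceilDiv {n r D : ℕ} (hr : 0 < r) (hD : n ≤ 2 * (r * D) + 1) :
    ∑ j ∈ range n, min j (n - j) ⌈/⌉ r = ∑ t ∈ range D, (n - 1 - 2 * (r * t)) := by
  calc ∑ j ∈ range n, min j (n - j) ⌈/⌉ r
      = ∑ j ∈ range n, #{t ∈ range D | r * t < min j (n - j)} :=
        sum_congr rfl fun j _ => (card_range_filter_mul_lt hr (by omega)).symm
    _ = ∑ t ∈ range D, #{j ∈ range n | r * t < min j (n - j)} := by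
        simp only [card_filter]; exact sum_comm
    _ = ∑ t ∈ range D, (n - 1 - 2 * (r * t)) :=
        sum_congr rfl fun t _ => card_range_filter_lt_min_sub n (r * t)

lemma cast_sum_range_sub_two_mul_mul {n r D : ℕ} (hD : 2 * (r * D) + 1 ≤ n + 2 * r) :
    ((∑ t ∈ range D, (n - 1 - 2 * (r * t)) : ℕ) : ℚ) = D * ((n : ℚ) - 1) - r * D * (D - 1) := by
  induction D with
  | zero => simp
  | succ D ih =>
    rw [Nat.mul_succ] at hD
    rw [sum_range_succ, Nat.cast_add, ih (by omega), Nat.cast_sub (by omega : 2 * (r * D) ≤ n - 1),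
      Nat.cast_sub (by omega : 1 ≤ n)]
    push_cast
    ring

section hararyEven

open Fin.NatCast

variable {k n : ℕ}

lemma circDist_le_mul_length {x y : Fin n} (p : (hararyEven k n).Walk x y) :
    circDist n x y ≤ k / 2 * p.length := by
  induction p with
  | nil => simp [circDist_eq_min_dist]
  | @cons u v w h p ih =>
    calc circDist n u w ≤ circDist n u v + circDist n v w := circDist_triangle u v w
      _ ≤ k / 2 + k / 2 * p.length := Nat.add_le_add h.2 ih
      _ = k / 2 * (p.length + 1) := by ring

lemma exists_walk_length_le_one {x y : Fin n} (h : circDist n x y ≤ k / 2) :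
    ∃ p : (hararyEven k n).Walk x y, p.length ≤ 1 := by
  by_cases hxy : x = y
  · subst hxy
    exact ⟨.nil, zero_le_one⟩
  · exact ⟨.cons ⟨hxy, h⟩ .nil, le_rfl⟩

lemma exists_walk_add_natCast [NeZero n] (x : Fin n) {j m : ℕ} (h : j ≤ k / 2 * m) :
    ∃ p : (hararyEven k n).Walk x (x + (j : Fin n)), p.length ≤ m := by
  induction m generalizing x j with
  | zero =>
    obtain rfl : j = 0 := by simpa using h
    exact ⟨.copy .nil rfl (by simp), by simp⟩
  | succ m ih =>
    set s := min j (k / 2)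
    have hstep : circDist n x (x + (s : Fin n)) ≤ k / 2 := by
      rw [circDist_add_right, Fin.val_natCast]
      exact (min_le_left _ _).trans ((Nat.mod_le _ _).trans (min_le_right _ _))
    obtain ⟨p, hp⟩ := exists_walk_length_le_one hstep
    obtain ⟨q, hq⟩ := ih (x + (s : Fin n)) (j := j - s) (by rw [Nat.mul_succ] at h; omega)
    have hend : x + (s : Fin n) + ((j - s : ℕ) : Fin n) = x + (j : Fin n) := by
      rw [add_assoc, ← Nat.cast_add, Nat.add_sub_cancel' (min_le_left _ _)]
    exact ⟨(p.append q).copy rfl hend, by simp; omega⟩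

lemma exists_walk_length_le_ceilDiv [NeZero n] (hr : 0 < k / 2) (x y : Fin n) :
    ∃ p : (hararyEven k n).Walk x y, p.length ≤ circDist n x y ⌈/⌉ (k / 2) := by
  rcases min_choice (x - y).val (y - x).val with h | h <;> rw [← circDist_eq_min_val_sub] at h
  · obtain ⟨p, hp⟩ := exists_walk_add_natCast y (le_smul_ceilDiv (b := (x - y).val) hr)
    exact ⟨(p.copy rfl (by simp)).reverse, by simpa [h] using hp⟩
  · obtain ⟨p, hp⟩ := exists_walk_add_natCast x (le_smul_ceilDiv (b := (y - x).val) hr)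
    exact ⟨p.copy rfl (by simp), by simpa [h] using hp⟩

lemma hararyEven_dist [NeZero n] (hr : 0 < k / 2) (x y : Fin n) :
    (hararyEven k n).dist x y = circDist n x y ⌈/⌉ (k / 2) := by
  obtain ⟨p, hp⟩ := exists_walk_length_le_ceilDiv hr x y
  obtain ⟨q, hq⟩ := p.reachable.exists_walk_length_eq_dist
  refine le_antisymm ((dist_le p).trans hp) ?_
  rw [← hq, ceilDiv_le_iff_le_mul hr]
  exact circDist_le_mul_length q

lemma status_hararyEven [NeZero n] (hr : 0 < k / 2) (x : Fin n) :
    status (hararyEven k n) x = ∑ j ∈ range n, min j (n - j) ⌈/⌉ (k / 2) := by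
  rw [status, ← Fintype.sum_equiv (Equiv.addLeft x) _ _ (fun _ => rfl), ← Fin.sum_univ_eq_sum_range]
  exact Fintype.sum_congr _ _ fun a => by
    rw [Equiv.coe_addLeft, hararyEven_dist hr, circDist_add_right]

end hararyEven

theorem hararyEven_status_general (k n : ℕ) (hk : 2 ≤ k) (hke : Even k)
    (x : Fin n) :
    (status (hararyEven k n) x : ℚ) = (1 / 2 : ℚ) * ((n + k - 2) / k : ℕ) *
      (2 * (n : ℚ) + (k : ℚ) - 2 - (k : ℚ) * ((n + k - 2) / k : ℕ)) := by
  obtain ⟨r, rfl⟩ := hke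
  have hr : 0 < (r + r) / 2 := by omega
  have : NeZero n := ⟨x.pos.ne'⟩
  set D := (n + (r + r) - 2) / (r + r)
  have hD : n ≤ 2 * (r * D) + 1 ∧ 2 * (r * D) + 1 ≤ n + 2 * r := by
    have hdiv : (r + r) * D + (n + (r + r) - 2) % (r + r) = n + (r + r) - 2 := Nat.div_add_mod _ _
    have hmod := Nat.mod_lt (n + (r + r) - 2) (by omega : 0 < r + r)
    have hmul : (r + r) * D = 2 * (r * D) := by ring
    omega
  rw [status_hararyEven hr, show (r + r) / 2 = r by omega,
    sum_range_min_sub_ceilDiv (by omega) hD.1, cast_sum_range_sub_two_mul_mul hD.2]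
  push_cast
  ring

/-- For `k` even, `n - 1 > k ≥ 2`, with `D = ⌊(n+k-2)/k⌋`, every vertex of
`H_{k,n}` has status `(1/2)·D·(2n+k-2-kD)`. -/
theorem hararyEven_status (k n : ℕ) (hk : 2 ≤ k) (hke : Even k) (hn : k < n - 1)
    (x : Fin n) :
    (status (hararyEven k n) x : ℚ) = (1 / 2 : ℚ) * ((n + k - 2) / k : ℕ) *
      (2 * (n : ℚ) + (k : ℚ) - 2 - (k : ℚ) * ((n + k - 2) / k : ℕ)) :=
  hararyEven_status_general k n hk hke x
end

section
/- Let n - 1 > k ≥ 2, let G be a graph whose vertices at distance levels from some vertex x satisfy |N(x,i)| ≥ k for 1 ≤ i ≤ t-1 where t = ecc(x), and suppose the level sets partition V(G) with total size n. Then W(x,G) ≤ (n-1)t - k·t(t-1)/2. -/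
open Finset SimpleGraph

/-! Summing `t - d(x,y)` over all vertices gives `t·n - W(x,G)`. The vertex `x` itself
contributes `t`, and each of the at least `k` vertices of `N(x,i)`, `1 ≤ i ≤ t-1`,
contributes `t - i`, so `t·n - W(x,G) ≥ t + k·t(t-1)/2`. -/

lemma sum_range_sub_eq (s : ℕ) : ∑ i ∈ range s, ((s : ℚ) - i) = s * (s + 1) / 2 := by
  induction s with
  | zero => simp
  | succ s ih =>
    rw [sum_range_succ]
    push_cast
    simp only [add_sub_right_comm _ (1 : ℚ), sum_add_distrib, ih, sum_const, card_range,
      nsmul_eq_mul]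
    ring

lemma add_mul_triangle_le_sum_mul_sub {c : ℕ → ℕ} {k t : ℕ} (h0 : 1 ≤ c 0)
    (hc : ∀ i, 1 ≤ i → i ≤ t - 1 → k ≤ c i) :
    (t : ℚ) + k * t * (t - 1) / 2 ≤ ∑ i ∈ range (t + 1), c i * ((t : ℚ) - i) := by
  cases t with
  | zero => simp
  | succ s =>
    have hmiddle : ∑ i ∈ range s, (k : ℚ) * (s - i) ≤
        ∑ i ∈ range s, c (i + 1) * (((s + 1 : ℕ) : ℚ) - (i + 1 : ℕ)) := by
      refine sum_le_sum fun i hi => ?_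
      have hi : i < s := mem_range.mp hi
      have hk : (k : ℚ) ≤ c (i + 1) := by exact_mod_cast hc (i + 1) (by omega) (by omega)
      have hpos : (0 : ℚ) ≤ s - i := by
        rw [sub_nonneg]
        exact_mod_cast hi.le
      push_cast
      rw [add_sub_add_right_eq_sub]
      exact mul_le_mul_of_nonneg_right hk hpos
    have h0 : (1 : ℚ) ≤ c 0 := by exact_mod_cast h0
    rw [← mul_sum, sum_range_sub_eq] at hmiddle
    rw [sum_range_succ, sum_range_succ', sub_self, mul_zero, add_zero]
    push_cast at hmiddle ⊢
    nlinarith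

section

variable {V : Type*} [Fintype V] (G : SimpleGraph V) (x : V)

lemma dist_le_ecc (y : V) : G.dist x y ≤ ecc G x :=
  le_sup (f := fun y => G.dist x y) (mem_univ y)

variable [DecidableEq V]

lemma sum_comp_dist_eq_sum_sphere {M : Type*} [AddCommMonoid M] (f : ℕ → M) :
    ∑ y, f (G.dist x y) = ∑ i ∈ range (ecc G x + 1), #(sphere G x i) • f i := by
  rw [← sum_fiberwise_of_maps_to (g := fun y => G.dist x y)
    (fun y _ => mem_range_succ_iff.mpr (dist_le_ecc G x y))]
  refine sum_congr rfl fun i _ => ?_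
  rw [sum_congr rfl fun y hy => congrArg f (mem_filter.mp hy).2, sum_const]
  rfl

lemma ecc_mul_card_sub_status :
    (ecc G x : ℚ) * Fintype.card V - status G x =
      ∑ i ∈ range (ecc G x + 1), #(sphere G x i) * ((ecc G x : ℚ) - i) := by
  simp only [← nsmul_eq_mul, ← sum_comp_dist_eq_sum_sphere G x (fun i => (ecc G x : ℚ) - i),
    sum_sub_distrib, sum_const, card_univ, status, Nat.cast_sum]
  rw [nsmul_eq_mul, nsmul_eq_mul, mul_comm]

lemma one_le_card_sphere_zero : 1 ≤ #(sphere G x 0) :=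
  card_pos.mpr ⟨x, by simp [sphere]⟩

end

theorem status_le_of_sphere_bound_general (n k : ℕ)
    {V : Type*} [Fintype V] [DecidableEq V] (G : SimpleGraph V)
    (hcard : Fintype.card V = n) (x : V) (t : ℕ)
    (ht : ecc G x = t)
    (hlev : ∀ i, 1 ≤ i → i ≤ t - 1 → k ≤ (sphere G x i).card) :
    (status G x : ℚ) ≤ ((n : ℚ) - 1) * t - (k : ℚ) * t * (t - 1) / 2 := by
  subst hcard ht
  have hlower := add_mul_triangle_le_sum_mul_sub (one_le_card_sphere_zero G x) hlev
  rw [← ecc_mul_card_sub_status] at hlower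
  linarith

/-- If the distance level sets of `x` satisfy `|N(x,i)| ≥ k` for `1 ≤ i ≤ t-1`
where `t = ecc(x)`, in a connected graph of order `n` with `n - 1 > k ≥ 2`, then
`W(x,G) ≤ (n-1)t - k·t(t-1)/2`. -/
theorem status_le_of_sphere_bound (n k : ℕ) (hk : 2 ≤ k) (hn : k < n - 1)
    {V : Type*} [Fintype V] [DecidableEq V] (G : SimpleGraph V)
    (hG : G.Connected) (hcard : Fintype.card V = n) (x : V) (t : ℕ)
    (ht : ecc G x = t)
    (hlev : ∀ i, 1 ≤ i → i ≤ t - 1 → k ≤ (sphere G x i).card) :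
    (status G x : ℚ) ≤ ((n : ℚ) - 1) * t - (k : ℚ) * t * (t - 1) / 2 :=
  status_le_of_sphere_bound_general n k G hcard x t ht hlev
end
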